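/- arXiv:1602.03972 — 4 statements merged into one kernel-verified Lean document; each statement's English description precedes it below -/
import Mathlib

section
/- Under completely randomized assignment, Var(Ȳ^obs(z_j)) = (1/n_j − 1/N) S²(z_j) for each j, and Cov(Ȳ^obs(z_j), Ȳ^obs(z_{j'})) = −(1/N) S(z_j, z_{j'}) for j ≠ j', where S²(z_j) and S(z_j,z_{j'}) are the finite-population variances and covariances of the potential outcomes. -/
open Matrix Finset

abbrev CRD (N J : ℕ) (n : Fin J → ℕ) :=
  {w : Fin N → Fin J // ∀ l, (Finset.univ.filter fun i => w i = l).card = n l}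

namespace CRD
variable {N J : ℕ} {n : Fin J → ℕ}

lemma nonempty (hsum : ∑ j, n j = N) : Nonempty (CRD N J n) := by
  have e : Fin N ≃ Σ j, Fin (n j) := Fintype.equivOfCardEq (by simp [hsum])
  refine ⟨⟨fun i => (e i).1, fun l => ?_⟩⟩
  have h1 : (Finset.univ.filter fun i => (e i).1 = l).card
      = Fintype.card {i : Fin N // (e i).1 = l} := (Fintype.card_subtype _).symm
  rw [h1]
  have e2 : {i : Fin N // (e i).1 = l} ≃ {s : Σ j, Fin (n j) // s.1 = l} :=
    e.subtypeEquiv (fun a => Iff.rfl)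
  have e3 : {s : Σ j, Fin (n j) // s.1 = l} ≃ Fin (n l) :=
    { toFun := fun s => Fin.cast (by rw [s.2]) s.1.2
      invFun := fun a => ⟨⟨l, a⟩, rfl⟩
      left_inv := by rintro ⟨⟨j, a⟩, rfl⟩; rfl
      right_inv := fun a => rfl }
  rw [Fintype.card_congr (e2.trans e3), Fintype.card_fin]

lemma permCount (w : Fin N → Fin J) (σ : Equiv.Perm (Fin N)) (l : Fin J) :
    (Finset.univ.filter fun i => w (σ i) = l).card
      = (Finset.univ.filter fun i => w i = l).card := by
  rw [← Fintype.card_subtype, ← Fintype.card_subtype]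
  exact Fintype.card_congr (σ.subtypeEquiv (fun a => Iff.rfl))

def permΩ (σ : Equiv.Perm (Fin N)) : CRD N J n ≃ CRD N J n where
  toFun w := ⟨fun i => w.1 (σ i), fun l => by rw [permCount w.1 σ l]; exact w.2 l⟩
  invFun w := ⟨fun i => w.1 (σ⁻¹ i), fun l => by rw [permCount w.1 σ⁻¹ l]; exact w.2 l⟩
  left_inv w := by ext i; simp
  right_inv w := by ext i; simp

lemma sum_perm (σ : Equiv.Perm (Fin N)) (f : (Fin N → Fin J) → ℝ) :
    ∑ w : CRD N J n, f (fun i => w.1 (σ i)) = ∑ w : CRD N J n, f w.1 :=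
  Fintype.sum_equiv (permΩ σ) _ _ (fun _ => rfl)

lemma moment1 (i : Fin N) (j : Fin J) :
    (N : ℝ) * (∑ w : CRD N J n, if w.1 i = j then (1:ℝ) else 0)
      = (Fintype.card (CRD N J n) : ℝ) * n j := by
  have hsym : ∀ i' : Fin N,
      (∑ w : CRD N J n, if w.1 i' = j then (1:ℝ) else 0)
        = ∑ w : CRD N J n, if w.1 i = j then (1:ℝ) else 0 := by
    intro i'
    have := sum_perm (n := n) (Equiv.swap i i') (fun v => if v i = j then (1:ℝ) else 0)
    simpa [Equiv.swap_apply_left] using this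
  calc (N : ℝ) * (∑ w : CRD N J n, if w.1 i = j then (1:ℝ) else 0)
      = ∑ i' : Fin N, ∑ w : CRD N J n, (if w.1 i' = j then (1:ℝ) else 0) := by
        rw [Finset.sum_congr rfl (fun i' _ => hsym i'), Finset.sum_const, card_univ,
          Fintype.card_fin, nsmul_eq_mul]
    _ = ∑ w : CRD N J n, ∑ i' : Fin N, (if w.1 i' = j then (1:ℝ) else 0) := Finset.sum_comm
    _ = ∑ _w : CRD N J n, (n j : ℝ) := by
        refine Finset.sum_congr rfl (fun w _ => ?_)
        rw [Finset.sum_boole, w.2 j]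
    _ = (Fintype.card (CRD N J n) : ℝ) * n j := by
        rw [Finset.sum_const, card_univ, nsmul_eq_mul]

lemma moment2 (i i' : Fin N) (hii : i ≠ i') (j j' : Fin J) :
    ((N : ℝ) * ((N : ℝ) - 1)) *
        (∑ w : CRD N J n, if w.1 i = j ∧ w.1 i' = j' then (1:ℝ) else 0)
      = (Fintype.card (CRD N J n) : ℝ) *
          ((n j : ℝ) * (n j' : ℝ) - if j = j' then (n j : ℝ) else 0) := by
  have hsym : ∀ p ∈ (univ : Finset (Fin N)).offDiag,
      (∑ w : CRD N J n, if w.1 p.1 = j ∧ w.1 p.2 = j' then (1:ℝ) else 0)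
        = ∑ w : CRD N J n, if w.1 i = j ∧ w.1 i' = j' then (1:ℝ) else 0 := by
    rintro ⟨k, k'⟩ hp
    rw [Finset.mem_offDiag] at hp
    obtain ⟨-, -, hkk⟩ := hp
    obtain ⟨σ, hσ1, hσ2⟩ : ∃ σ : Equiv.Perm (Fin N), σ i = k ∧ σ i' = k' := by
      refine ⟨(Equiv.swap ((Equiv.swap i k) i') k') * (Equiv.swap i k), ?_, ?_⟩
      · simp only [Equiv.Perm.mul_apply, Equiv.swap_apply_left]
        refine Equiv.swap_apply_of_ne_of_ne (fun h => hii ?_) hkk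
        have := congrArg (Equiv.swap i k) h
        simpa using this
      · simp only [Equiv.Perm.mul_apply, Equiv.swap_apply_left]
    have := sum_perm (n := n) σ (fun v => if v i = j ∧ v i' = j' then (1:ℝ) else 0)
    simp only [hσ1, hσ2] at this
    exact this
  have hN : 0 < N := i.pos
  have hcard : ((univ : Finset (Fin N)).offDiag.card : ℝ) = (N : ℝ) * ((N : ℝ) - 1) := by
    rw [Finset.offDiag_card, card_univ, Fintype.card_fin]
    push_cast [Nat.cast_sub (Nat.le_mul_of_pos_left N hN)]
    ring
  have hperw : ∀ w : CRD N J n,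
      (∑ p ∈ (univ : Finset (Fin N)).offDiag,
          if w.1 p.1 = j ∧ w.1 p.2 = j' then (1:ℝ) else 0)
        = (n j : ℝ) * (n j' : ℝ) - if j = j' then (n j : ℝ) else 0 := by
    intro w
    have hprod : (∑ p ∈ (univ : Finset (Fin N)) ×ˢ univ,
        if w.1 p.1 = j ∧ w.1 p.2 = j' then (1:ℝ) else 0) = (n j : ℝ) * (n j' : ℝ) := by
      rw [Finset.sum_product]
      calc (∑ k : Fin N, ∑ k' : Fin N, if w.1 k = j ∧ w.1 k' = j' then (1:ℝ) else 0)
          = ∑ k : Fin N, ∑ k' : Fin N,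
              (if w.1 k = j then (1:ℝ) else 0) * (if w.1 k' = j' then (1:ℝ) else 0) := by
            simp only [ite_zero_mul_ite_zero, one_mul]
        _ = (∑ k : Fin N, if w.1 k = j then (1:ℝ) else 0) *
              (∑ k' : Fin N, if w.1 k' = j' then (1:ℝ) else 0) := by
            rw [Finset.sum_mul_sum]
        _ = (n j : ℝ) * (n j' : ℝ) := by
            rw [Finset.sum_boole, Finset.sum_boole, w.2 j, w.2 j']
    have hdiag : (∑ p ∈ (univ : Finset (Fin N)).diag,
        if w.1 p.1 = j ∧ w.1 p.2 = j' then (1:ℝ) else 0)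
          = if j = j' then (n j : ℝ) else 0 := by
      rw [Finset.sum_diag]
      by_cases h : j = j'
      · subst h
        simp only [and_self, if_pos rfl, if_true]
        rw [Finset.sum_boole, w.2 j]
      · have hfalse : ∀ k : Fin N, ¬(w.1 k = j ∧ w.1 k = j') := by
          rintro k ⟨h1, h2⟩; exact h (h1 ▸ h2 ▸ rfl)
        simp [hfalse, h]
    have hsplit : (∑ p ∈ (univ : Finset (Fin N)).diag,
          if w.1 p.1 = j ∧ w.1 p.2 = j' then (1:ℝ) else 0)
        + (∑ p ∈ (univ : Finset (Fin N)).offDiag,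
          if w.1 p.1 = j ∧ w.1 p.2 = j' then (1:ℝ) else 0)
        = ∑ p ∈ (univ : Finset (Fin N)) ×ˢ univ,
          if w.1 p.1 = j ∧ w.1 p.2 = j' then (1:ℝ) else 0 := by
      rw [← Finset.sum_union (Finset.disjoint_diag_offDiag _), Finset.diag_union_offDiag]
    rw [hprod, hdiag] at hsplit
    linarith
  calc ((N : ℝ) * ((N : ℝ) - 1)) *
        (∑ w : CRD N J n, if w.1 i = j ∧ w.1 i' = j' then (1:ℝ) else 0)
      = ∑ p ∈ (univ : Finset (Fin N)).offDiag,
          ∑ w : CRD N J n, if w.1 p.1 = j ∧ w.1 p.2 = j' then (1:ℝ) else 0 := by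
        rw [Finset.sum_congr rfl hsym, Finset.sum_const, nsmul_eq_mul, hcard]
    _ = ∑ w : CRD N J n, ∑ p ∈ (univ : Finset (Fin N)).offDiag,
          (if w.1 p.1 = j ∧ w.1 p.2 = j' then (1:ℝ) else 0) := Finset.sum_comm
    _ = ∑ _w : CRD N J n, ((n j : ℝ) * (n j' : ℝ) - if j = j' then (n j : ℝ) else 0) :=
        Finset.sum_congr rfl (fun w _ => hperw w)
    _ = (Fintype.card (CRD N J n) : ℝ) *
          ((n j : ℝ) * (n j' : ℝ) - if j = j' then (n j : ℝ) else 0) := by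
        rw [Finset.sum_const, card_univ, nsmul_eq_mul]

end CRD

set_option maxHeartbeats 1000000 in

/-- Under completely randomized assignment,
`Var(Ȳ^obs(z_j)) = (1/n_j - 1/N) S²(z_j)` and, for `j ≠ j'`,
`Cov(Ȳ^obs(z_j), Ȳ^obs(z_{j'})) = -(1/N) S(z_j, z_{j'})`, where `S²` and
`S(·,·)` are the finite-population variances and covariances of the potential
outcomes.  (Both statements are combined: the `j = j'` case is the variance.) -/
theorem stmt5 (N J : ℕ) (n : Fin J → ℕ) (hn : ∀ j, 2 ≤ n j)
    (hsum : ∑ j, n j = N)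
    (Y : Fin N → Fin J → ℝ)
    (Ybar : Fin J → ℝ) (hYbar : ∀ j, Ybar j = (N : ℝ)⁻¹ * ∑ i, Y i j)
    (S2 : Fin J → ℝ)
    (hS2 : ∀ j, S2 j = ((N : ℝ) - 1)⁻¹ * ∑ i, (Y i j - Ybar j) ^ 2)
    (Sc : Fin J → Fin J → ℝ)
    (hSc : ∀ j j', Sc j j' =
      ((N : ℝ) - 1)⁻¹ * ∑ i, (Y i j - Ybar j) * (Y i j' - Ybar j'))
    (Yobs : (Fin N → Fin J) → Fin J → ℝ)
    (hYobs : ∀ w j, Yobs w j = (n j : ℝ)⁻¹ * ∑ i, (if w i = j then Y i j else 0)) :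
    ∀ j j' : Fin J,
      (Fintype.card
        {w : Fin N → Fin J //
          ∀ l, (Finset.univ.filter fun i => w i = l).card = n l} : ℝ)⁻¹ *
      ∑ w : {w : Fin N → Fin J //
          ∀ l, (Finset.univ.filter fun i => w i = l).card = n l},
        (Yobs w.1 j - Ybar j) * (Yobs w.1 j' - Ybar j')
      = if j = j' then ((n j : ℝ)⁻¹ - (N : ℝ)⁻¹) * S2 j
        else -(N : ℝ)⁻¹ * Sc j j' := by
  intro j j'
  have hnemp : Nonempty (CRD N J n) := CRD.nonempty hsum
  have hMpos : 0 < Fintype.card (CRD N J n) := Fintype.card_pos_iff.mpr hnemp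
  have hM0 : (Fintype.card (CRD N J n) : ℝ) ≠ 0 := Nat.cast_ne_zero.mpr hMpos.ne'
  have hnN : ∀ l, n l ≤ N := fun l =>
    hsum ▸ Finset.single_le_sum (fun _ _ => Nat.zero_le _) (Finset.mem_univ l)
  have hN2 : 2 ≤ N := le_trans (hn j) (hnN j)
  have hN0 : (N : ℝ) ≠ 0 := Nat.cast_ne_zero.mpr (by omega)
  have hN1 : (N : ℝ) - 1 ≠ 0 := by
    have : (1 : ℝ) < N := by exact_mod_cast (by omega : 1 < N)
    exact sub_ne_zero_of_ne (ne_of_gt this)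
  have hnj0 : (n j : ℝ) ≠ 0 := Nat.cast_ne_zero.mpr (by have := hn j; omega)
  have hnj'0 : (n j' : ℝ) ≠ 0 := Nat.cast_ne_zero.mpr (by have := hn j'; omega)
  have hF : ∀ (i : Fin N) (l : Fin J),
      (∑ w : CRD N J n, if w.1 i = l then (1:ℝ) else 0)
        = (Fintype.card (CRD N J n) : ℝ) * n l / N := by
    intro i l
    rw [eq_div_iff hN0]
    linarith [CRD.moment1 (n := n) i l]
  have hH : ∀ i k : Fin N, i ≠ k →
      (∑ w : CRD N J n, if w.1 i = j ∧ w.1 k = j' then (1:ℝ) else 0)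
        = (Fintype.card (CRD N J n) : ℝ) *
            ((n j : ℝ) * (n j' : ℝ) - if j = j' then (n j : ℝ) else 0)
          / ((N : ℝ) * ((N : ℝ) - 1)) := by
    intro i k hik
    rw [eq_div_iff (mul_ne_zero hN0 hN1)]
    linarith [CRD.moment2 (n := n) i k hik j j']
  -- first moment of the treatment-group totals
  have key : ∀ l : Fin J,
      (∑ w : CRD N J n, ∑ i, if w.1 i = l then Y i l else 0)
        = (Fintype.card (CRD N J n) : ℝ) * n l / N * ∑ i, Y i l := by
    intro l
    rw [Finset.sum_comm]
    calc (∑ i, ∑ w : CRD N J n, if w.1 i = l then Y i l else 0)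
        = ∑ i, Y i l * ((Fintype.card (CRD N J n) : ℝ) * n l / N) := by
          refine Finset.sum_congr rfl fun i _ => ?_
          rw [← hF i l, Finset.mul_sum]
          exact Finset.sum_congr rfl fun w _ => by rw [mul_ite, mul_one, mul_zero]
      _ = (Fintype.card (CRD N J n) : ℝ) * n l / N * ∑ i, Y i l := by
          rw [← Finset.sum_mul]; ring
  -- second moment of the totals
  have step2 : (∑ w : CRD N J n,
        (∑ i, if w.1 i = j then Y i j else 0) * (∑ i, if w.1 i = j' then Y i j' else 0))
      = (if j = j' then (Fintype.card (CRD N J n) : ℝ) * n j / N * (∑ i, Y i j * Y i j') else 0)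
        + (Fintype.card (CRD N J n) : ℝ) *
            ((n j : ℝ) * (n j' : ℝ) - if j = j' then (n j : ℝ) else 0)
          / ((N : ℝ) * ((N : ℝ) - 1)) *
          ((∑ i, Y i j) * (∑ i, Y i j') - ∑ i, Y i j * Y i j') := by
    have hw : ∀ w : CRD N J n,
        (∑ i, if w.1 i = j then Y i j else 0) * (∑ i, if w.1 i = j' then Y i j' else 0)
          = ∑ p ∈ (univ : Finset (Fin N)) ×ˢ univ,
              (if w.1 p.1 = j ∧ w.1 p.2 = j' then Y p.1 j * Y p.2 j' else 0) := by
      intro w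
      rw [Finset.sum_mul_sum, Finset.sum_product]
      exact Finset.sum_congr rfl fun i _ => Finset.sum_congr rfl fun k _ =>
        ite_zero_mul_ite_zero _ _ _ _
    rw [Finset.sum_congr rfl (fun w _ => hw w), Finset.sum_comm,
      ← Finset.diag_union_offDiag (univ : Finset (Fin N)),
      Finset.sum_union (Finset.disjoint_diag_offDiag _)]
    have hoffsum : (∑ p ∈ (univ : Finset (Fin N)).offDiag, Y p.1 j * Y p.2 j')
        = (∑ i, Y i j) * (∑ i, Y i j') - ∑ i, Y i j * Y i j' := by
      have h1 : (∑ p ∈ (univ : Finset (Fin N)).diag, Y p.1 j * Y p.2 j')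
          + (∑ p ∈ (univ : Finset (Fin N)).offDiag, Y p.1 j * Y p.2 j')
          = ∑ p ∈ (univ : Finset (Fin N)) ×ˢ univ, Y p.1 j * Y p.2 j' := by
        rw [← Finset.sum_union (Finset.disjoint_diag_offDiag _), Finset.diag_union_offDiag]
      have h2 : (∑ p ∈ (univ : Finset (Fin N)) ×ˢ univ, Y p.1 j * Y p.2 j')
          = (∑ i, Y i j) * (∑ i, Y i j') := by
        rw [Finset.sum_mul_sum, Finset.sum_product]
      rw [h2, Finset.sum_diag] at h1
      linarith
    congr 1
    · -- diagonal part
      rw [Finset.sum_diag]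
      by_cases h : j = j'
      · subst h
        simp only [and_self, if_pos rfl, if_true]
        calc (∑ i, ∑ w : CRD N J n, if w.1 i = j then Y i j * Y i j else 0)
            = ∑ i, (Y i j * Y i j) * ((Fintype.card (CRD N J n) : ℝ) * n j / N) := by
              refine Finset.sum_congr rfl fun i _ => ?_
              rw [← hF i j, Finset.mul_sum]
              exact Finset.sum_congr rfl fun w _ => by rw [mul_ite, mul_one, mul_zero]
          _ = (Fintype.card (CRD N J n) : ℝ) * n j / N * ∑ i, Y i j * Y i j := by
              rw [← Finset.sum_mul]; ring
      · simp only [if_neg h]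
        have hfalse : ∀ (i : Fin N) (w : CRD N J n), ¬(w.1 i = j ∧ w.1 i = j') := by
          rintro i w ⟨h1, h2⟩; exact h (h1 ▸ h2 ▸ rfl)
        simp [hfalse]
    · -- off-diagonal part
      calc (∑ p ∈ (univ : Finset (Fin N)).offDiag,
              ∑ w : CRD N J n, if w.1 p.1 = j ∧ w.1 p.2 = j' then Y p.1 j * Y p.2 j' else 0)
          = ∑ p ∈ (univ : Finset (Fin N)).offDiag, (Y p.1 j * Y p.2 j') *
              ((Fintype.card (CRD N J n) : ℝ) *
                ((n j : ℝ) * (n j' : ℝ) - if j = j' then (n j : ℝ) else 0)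
              / ((N : ℝ) * ((N : ℝ) - 1))) := by
            refine Finset.sum_congr rfl fun p hp => ?_
            rw [← hH p.1 p.2 (Finset.mem_offDiag.mp hp).2.2, Finset.mul_sum]
            exact Finset.sum_congr rfl fun w _ => by rw [mul_ite, mul_one, mul_zero]
        _ = (∑ p ∈ (univ : Finset (Fin N)).offDiag, Y p.1 j * Y p.2 j') *
              ((Fintype.card (CRD N J n) : ℝ) *
                ((n j : ℝ) * (n j' : ℝ) - if j = j' then (n j : ℝ) else 0)
              / ((N : ℝ) * ((N : ℝ) - 1))) := by rw [← Finset.sum_mul]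
        _ = _ := by rw [hoffsum]; ring
  -- expand the centered product
  have hsummand : ∀ w : CRD N J n,
      (Yobs w.1 j - Ybar j) * (Yobs w.1 j' - Ybar j')
        = ((n j : ℝ)⁻¹ * (n j' : ℝ)⁻¹) *
            ((∑ i, if w.1 i = j then Y i j else 0) * (∑ i, if w.1 i = j' then Y i j' else 0))
          - Ybar j' * ((n j : ℝ)⁻¹ * (∑ i, if w.1 i = j then Y i j else 0))
          - Ybar j * ((n j' : ℝ)⁻¹ * (∑ i, if w.1 i = j' then Y i j' else 0))
          + Ybar j * Ybar j' := by
    intro w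
    rw [hYobs w.1 j, hYobs w.1 j']
    ring
  have hsumall : (∑ w : CRD N J n, (Yobs w.1 j - Ybar j) * (Yobs w.1 j' - Ybar j'))
      = ((n j : ℝ)⁻¹ * (n j' : ℝ)⁻¹) *
          (∑ w : CRD N J n, (∑ i, if w.1 i = j then Y i j else 0) *
            (∑ i, if w.1 i = j' then Y i j' else 0))
        - Ybar j' * ((n j : ℝ)⁻¹ * ∑ w : CRD N J n, ∑ i, if w.1 i = j then Y i j else 0)
        - Ybar j * ((n j' : ℝ)⁻¹ * ∑ w : CRD N J n, ∑ i, if w.1 i = j' then Y i j' else 0)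
        + (Fintype.card (CRD N J n) : ℝ) * (Ybar j * Ybar j') := by
    rw [Finset.sum_congr rfl (fun w _ => hsummand w)]
    simp only [Finset.sum_add_distrib, Finset.sum_sub_distrib, ← Finset.mul_sum,
      Finset.sum_const, card_univ, nsmul_eq_mul]
    ring
  rw [hsumall, step2, key j, key j']
  by_cases h : j = j'
  · subst h
    simp only [eq_self_iff_true, if_true]
    have e2 : (∑ i, (Y i j - Ybar j) ^ 2)
        = (∑ i, Y i j * Y i j) - 2 * Ybar j * (∑ i, Y i j) + N * (Ybar j * Ybar j) := by
      have hpt : ∀ i : Fin N, (Y i j - Ybar j) ^ 2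
          = Y i j * Y i j - 2 * Ybar j * Y i j + Ybar j * Ybar j := fun i => by ring
      rw [Finset.sum_congr rfl fun i _ => hpt i, Finset.sum_add_distrib,
        Finset.sum_sub_distrib, ← Finset.mul_sum, Finset.sum_const, card_univ,
        Fintype.card_fin, nsmul_eq_mul]
    rw [hS2 j, e2, hYbar j]
    generalize (∑ i : Fin N, Y i j) = A
    generalize (∑ i : Fin N, Y i j * Y i j) = C
    generalize ((Fintype.card (CRD N J n) : ℝ)) = K at hM0 ⊢
    field_simp
    ring
  · simp only [if_neg h]
    have e2 : (∑ i, (Y i j - Ybar j) * (Y i j' - Ybar j'))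
        = (∑ i, Y i j * Y i j') - Ybar j' * (∑ i, Y i j) - Ybar j * (∑ i, Y i j')
          + N * (Ybar j * Ybar j') := by
      have hpt : ∀ i : Fin N, (Y i j - Ybar j) * (Y i j' - Ybar j')
          = Y i j * Y i j' - Ybar j' * Y i j - Ybar j * Y i j' + Ybar j * Ybar j' :=
        fun i => by ring
      rw [Finset.sum_congr rfl fun i _ => hpt i, Finset.sum_add_distrib,
        Finset.sum_sub_distrib, Finset.sum_sub_distrib, ← Finset.mul_sum, ← Finset.mul_sum,
        Finset.sum_const, card_univ, Fintype.card_fin, nsmul_eq_mul]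
    rw [hSc j j', e2, hYbar j, hYbar j']
    generalize (∑ i : Fin N, Y i j) = A
    generalize (∑ i : Fin N, Y i j') = B
    generalize (∑ i : Fin N, Y i j * Y i j') = C
    generalize ((Fintype.card (CRD N J n) : ℝ)) = K at hM0 ⊢
    field_simp
    ring
end

section
/- The OLS estimator equals the randomization-based estimator: 2 (Xᵀ X)^{-1} Xᵀ Y^obs = 2^{-(K-1)} Hᵀ Ȳ^obs. Equivalently, (Xᵀ X)^{-1} Xᵀ Y^obs = 2^{-K} Hᵀ Ȳ^obs. -/
open Matrix Finset

/-- The OLS estimator equals the randomization-based estimator: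
`2 (Xᵀ X)⁻¹ Xᵀ Y^obs = 2^{-(K-1)} Hᵀ Ȳ^obs`; equivalently
`(Xᵀ X)⁻¹ Xᵀ Y^obs = 2^{-K} Hᵀ Ȳ^obs`. -/
theorem stmt12 (K : ℕ) (hK : 1 ≤ K)
    (n : Fin (2 ^ K) → ℕ) (hn : ∀ j, 1 ≤ n j)
    (H : Matrix (Fin (2 ^ K)) (Fin (2 ^ K)) ℝ)
    (hH1 : Hᵀ * H = ((2 : ℝ) ^ K) • 1) (hH2 : H * Hᵀ = ((2 : ℝ) ^ K) • 1)
    (X : Matrix (Σ j : Fin (2 ^ K), Fin (n j)) (Fin (2 ^ K)) ℝ)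
    (hX : ∀ p, X p = H p.1)
    (Yobs : (Σ j : Fin (2 ^ K), Fin (n j)) → ℝ)
    (Ybarobs : Fin (2 ^ K) → ℝ)
    (hYbarobs : ∀ j, Ybarobs j = (n j : ℝ)⁻¹ * ∑ i : Fin (n j), Yobs ⟨j, i⟩) :
    (2 : ℝ) • ((Xᵀ * X)⁻¹.mulVec (Xᵀ.mulVec Yobs))
      = ((2 : ℝ) ^ (K - 1))⁻¹ • Hᵀ.mulVec Ybarobs ∧
    (Xᵀ * X)⁻¹.mulVec (Xᵀ.mulVec Yobs) = ((2 : ℝ) ^ K)⁻¹ • Hᵀ.mulVec Ybarobs := by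
  have hnne : ∀ j, (n j : ℝ) ≠ 0 := fun j =>
    Nat.cast_ne_zero.mpr (Nat.one_le_iff_ne_zero.mp (hn j))
  have h2K : ((2 : ℝ) ^ K) ≠ 0 := by positivity
  set D : Matrix (Fin (2 ^ K)) (Fin (2 ^ K)) ℝ := Matrix.diagonal (fun j => (n j : ℝ))
  set Dinv : Matrix (Fin (2 ^ K)) (Fin (2 ^ K)) ℝ := Matrix.diagonal (fun j => (n j : ℝ)⁻¹)
  have hDD : D * Dinv = 1 := by
    have h1 : (fun j => (n j : ℝ) * (n j : ℝ)⁻¹) = fun _ => (1:ℝ) :=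
      funext fun j => mul_inv_cancel₀ (hnne j)
    simp only [D, Dinv, Matrix.diagonal_mul_diagonal, h1, Matrix.diagonal_one]
  -- Xᵀ X = Hᵀ D H
  have hXtX : Xᵀ * X = Hᵀ * D * H := by
    ext a b
    rw [Matrix.mul_apply, Matrix.mul_apply]
    rw [← Finset.univ_sigma_univ, Finset.sum_sigma]
    refine Finset.sum_congr rfl fun j _ => ?_
    have hD : (Hᵀ * D) a j = H j a * (n j : ℝ) := by
      simp [D, Matrix.mul_apply, Matrix.diagonal_apply, Matrix.transpose_apply]
    rw [hD]
    simp only [Matrix.transpose_apply, hX]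
    rw [Finset.sum_const, Finset.card_univ, Fintype.card_fin, nsmul_eq_mul]
    ring
  -- inverse
  set B : Matrix (Fin (2 ^ K)) (Fin (2 ^ K)) ℝ :=
    (((2 : ℝ) ^ K)⁻¹ * ((2 : ℝ) ^ K)⁻¹) • (Hᵀ * Dinv * H)
  have hinv : (Xᵀ * X) * B = 1 := by
    rw [hXtX]
    simp only [B, Matrix.mul_smul]
    have : Hᵀ * D * H * (Hᵀ * Dinv * H) = ((2:ℝ)^K) • (Hᵀ * (D * Dinv) * H) := by
      calc Hᵀ * D * H * (Hᵀ * Dinv * H) = Hᵀ * D * (H * Hᵀ) * (Dinv * H) := by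
            simp only [Matrix.mul_assoc]
        _ = ((2:ℝ)^K) • (Hᵀ * (D * Dinv) * H) := by
            rw [hH2]
            simp only [Matrix.mul_smul, Matrix.smul_mul, Matrix.mul_one]
            simp [Matrix.mul_assoc]
    rw [this, hDD, Matrix.mul_one, smul_smul, hH1, smul_smul]
    have h1 : ((2:ℝ)^K)⁻¹ * ((2:ℝ)^K)⁻¹ * 2^K * 2^K = 1 := by field_simp
    rw [h1, one_smul]
  have hBinv : (Xᵀ * X)⁻¹ = B := Matrix.inv_eq_right_inv hinv
  -- Xᵀ Yobs = Hᵀ (D Ȳ)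
  set w : Fin (2 ^ K) → ℝ := fun j => (n j : ℝ) * Ybarobs j
  have hXtY : Xᵀ.mulVec Yobs = Hᵀ.mulVec w := by
    funext a
    simp only [Matrix.mulVec, dotProduct, Matrix.transpose_apply]
    rw [← Finset.univ_sigma_univ, Finset.sum_sigma]
    congr 1
    funext j
    simp only [hX]
    rw [← Finset.mul_sum]
    have hw : w j = ∑ i : Fin (n j), Yobs ⟨j, i⟩ := by
      simp only [w, hYbarobs j]
      rw [mul_inv_cancel_left₀ (hnne j)]
    rw [hw]
  have key : (Xᵀ * X)⁻¹.mulVec (Xᵀ.mulVec Yobs) = ((2 : ℝ) ^ K)⁻¹ • Hᵀ.mulVec Ybarobs := by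
    rw [hBinv, hXtY]
    have hDw : Dinv.mulVec w = Ybarobs := by
      funext j
      simp only [Dinv, Matrix.mulVec_diagonal, w]
      rw [inv_mul_cancel_left₀ (hnne j)]
    have step : (Hᵀ * Dinv * H).mulVec (Hᵀ.mulVec w) = ((2:ℝ)^K) • Hᵀ.mulVec Ybarobs := by
      rw [Matrix.mulVec_mulVec, Matrix.mul_assoc, Matrix.mul_assoc, hH2, Matrix.mul_smul,
        Matrix.mul_one, Matrix.mul_smul, Matrix.smul_mulVec,
        ← Matrix.mulVec_mulVec, hDw]
    simp only [B, Matrix.smul_mulVec, step, smul_smul]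
    congr 1
    field_simp
  refine ⟨?_, key⟩
  rw [key, smul_smul]
  congr 1
  have : (2:ℝ)^K = 2 * 2^(K-1) := by
    rw [← pow_succ']
    congr 1
    omega
  rw [this]
  field_simp
end

section
/- For each j, (Xᵀ X)^{-1} h̃_jᵀ h̃_j (Xᵀ X)^{-1} = (1 / (2^{2K} n_j²)) h̃_jᵀ h̃_j. -/
open Matrix Finset

lemma vmv_mul_vmv {m : Type*} [Fintype m] (a b c d : m → ℝ) :
    vecMulVec a b * vecMulVec c d = (dotProduct b c) • vecMulVec a d := by
  ext i k
  simp [mul_apply, vecMulVec_apply, dotProduct, Finset.sum_mul, Finset.mul_sum]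
  congr 1; ext x; ring

lemma aux1 (a b : ℝ) (ha : a ≠ 0) (hb : b ≠ 0) :
    b * (a * a * b)⁻¹ * a = a⁻¹ := by
  field_simp

lemma aux2 (a b : ℝ) (ha : a ≠ 0) (hb : b ≠ 0) :
    (a * a * b)⁻¹ * a = (a * b)⁻¹ := by
  field_simp

/-- For each `j`,
`(Xᵀ X)⁻¹ h̃_jᵀ h̃_j (Xᵀ X)⁻¹ = (1 / (2^{2K} n_j²)) h̃_jᵀ h̃_j`, where
`Xᵀ X = ∑_{j'} n_{j'} h̃_{j'}ᵀ h̃_{j'}` with all `n_{j'} ≥ 1`. -/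
theorem stmt14 (K : ℕ) (n : Fin (2 ^ K) → ℕ) (hn : ∀ j, 1 ≤ n j)
    (H : Matrix (Fin (2 ^ K)) (Fin (2 ^ K)) ℝ)
    (hdot : ∀ j j', dotProduct (H j) (H j') =
      if j = j' then (2 : ℝ) ^ K else 0)
    (M : Matrix (Fin (2 ^ K)) (Fin (2 ^ K)) ℝ)
    (hM : M = ∑ j', (n j' : ℝ) • vecMulVec (H j') (H j')) :
    ∀ j, M⁻¹ * vecMulVec (H j) (H j) * M⁻¹
      = ((2 : ℝ) ^ (2 * K) * (n j : ℝ) ^ 2)⁻¹ • vecMulVec (H j) (H j) := by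
  have hKpos : (0 : ℝ) < (2 : ℝ) ^ K := by positivity
  have hnpos : ∀ j, (0 : ℝ) < (n j : ℝ) := fun j => by exact_mod_cast hn j
  have hHHT : H * Hᵀ = ((2 : ℝ) ^ K) • 1 := by
    ext i k
    rw [Matrix.mul_apply]
    simp only [Matrix.transpose_apply, Matrix.smul_apply, Matrix.one_apply,
      smul_eq_mul]
    rw [show ∑ x, H i x * H k x = dotProduct (H i) (H k) from rfl, hdot]
    split <;> simp
  have hHTH : Hᵀ * H = ((2 : ℝ) ^ K) • 1 := by
    have h1 : H * (((2 : ℝ) ^ K)⁻¹ • Hᵀ) = 1 := by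
      rw [Matrix.mul_smul, hHHT, smul_smul, inv_mul_cancel₀ hKpos.ne', one_smul]
    have h2 : (((2 : ℝ) ^ K)⁻¹ • Hᵀ) * H = 1 := by
      rw [mul_eq_one_comm] at h1; exact h1
    calc Hᵀ * H = ((2 : ℝ) ^ K) • ((((2 : ℝ) ^ K)⁻¹ • Hᵀ) * H) := by
          rw [Matrix.smul_mul, smul_smul, mul_inv_cancel₀ hKpos.ne', one_smul]
      _ = ((2 : ℝ) ^ K) • 1 := by rw [h2]
  have hsum : ∑ j, vecMulVec (H j) (H j) = ((2 : ℝ) ^ K) • 1 := by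
    rw [← hHTH]
    ext i k
    simp [Matrix.sum_apply, mul_apply, vecMulVec_apply, mul_comm]
  set N : Matrix (Fin (2 ^ K)) (Fin (2 ^ K)) ℝ :=
    ∑ j', ((2 : ℝ) ^ (2 * K) * (n j' : ℝ))⁻¹ • vecMulVec (H j') (H j') with hN
  have hMN : M * N = 1 := by
    rw [hM, hN, Finset.sum_mul]
    have key : ∀ j ∈ Finset.univ, ((n j : ℝ) • vecMulVec (H j) (H j)) * N
        = ((2 : ℝ) ^ K)⁻¹ • vecMulVec (H j) (H j) := by
      intro j _
      rw [hN, Finset.mul_sum, Finset.sum_eq_single j]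
      · rw [Matrix.smul_mul, Matrix.mul_smul, vmv_mul_vmv, hdot, if_pos rfl,
          smul_smul, smul_smul]
        congr 1
        rw [two_mul, pow_add]
        exact aux1 _ _ hKpos.ne' (hnpos j).ne'
      · intro b _ hb
        rw [Matrix.smul_mul, Matrix.mul_smul, vmv_mul_vmv, hdot,
          if_neg (fun h => hb h.symm)]
        simp
      · simp
    rw [Finset.sum_congr rfl key, ← Finset.smul_sum, hsum, smul_smul,
      inv_mul_cancel₀ hKpos.ne', one_smul]
  have hMinv : M⁻¹ = N := Matrix.inv_eq_right_inv hMN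
  intro j
  rw [hMinv]
  have hNP : N * vecMulVec (H j) (H j)
      = ((2 : ℝ) ^ K * (n j : ℝ))⁻¹ • vecMulVec (H j) (H j) := by
    rw [hN, Finset.sum_mul, Finset.sum_eq_single j]
    · rw [Matrix.smul_mul, vmv_mul_vmv, hdot, if_pos rfl, smul_smul]
      congr 1
      rw [two_mul, pow_add]
      exact aux2 _ _ hKpos.ne' (hnpos j).ne'
    · intro b _ hb
      rw [Matrix.smul_mul, vmv_mul_vmv, hdot, if_neg hb]
      simp
    · simp
  have hPN : vecMulVec (H j) (H j) * N
      = ((2 : ℝ) ^ K * (n j : ℝ))⁻¹ • vecMulVec (H j) (H j) := by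
    rw [hN, Finset.mul_sum, Finset.sum_eq_single j]
    · rw [Matrix.mul_smul, vmv_mul_vmv, hdot, if_pos rfl, smul_smul]
      congr 1
      rw [two_mul, pow_add]
      exact aux2 _ _ hKpos.ne' (hnpos j).ne'
    · intro b _ hb
      rw [Matrix.mul_smul, vmv_mul_vmv, hdot, if_neg (fun h => hb h.symm)]
      simp
    · simp
  rw [hNP, Matrix.smul_mul, hPN, smul_smul]
  congr 1
  rw [two_mul, pow_add]
  ring
end

section
/- The leverage of any unit assigned treatment z_j equals 1/n_j: h̃_j (Xᵀ X)^{-1} h̃_jᵀ = 1/n_j. -/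
/-!
With `D = diagonal n` we have `M = Hᵀ D H`, and `H` is invertible because `H Hᵀ = 2^K • 1`.
Hence `M⁻¹ = H⁻¹ D⁻¹ (Hᵀ)⁻¹`, so `H M⁻¹ Hᵀ = D⁻¹`, whose `j`-th diagonal entry is the leverage
`h̃_j M⁻¹ h̃_jᵀ`.
-/

open Matrix Finset

namespace Matrix

variable {m n R : Type*} [Fintype m] [DecidableEq m]

theorem sum_smul_vecMulVec_row [CommSemiring R] (A : Matrix m n R) (d : m → R) :
    ∑ i, d i • vecMulVec (A i) (A i) = Aᵀ * diagonal d * A := by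
  ext k l
  rw [mul_apply, Matrix.sum_apply]
  refine Finset.sum_congr rfl fun i _ => ?_
  rw [mul_diagonal, Matrix.smul_apply, vecMulVec_apply, transpose_apply, smul_eq_mul]
  ring

theorem isUnit_det_of_mul_transpose_eq_smul_one [Field R] {A : Matrix m m R} {c : R}
    (hc : c ≠ 0) (h : A * Aᵀ = c • 1) : IsUnit A.det :=
  isUnit_det_of_right_inverse (B := c⁻¹ • Aᵀ) <| by
    rw [Matrix.mul_smul, h, smul_smul, inv_mul_cancel₀ hc, one_smul]

theorem inv_diagonal_of_ne_zero [Field R] {v : m → R} (hv : ∀ i, v i ≠ 0) :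
    (diagonal v)⁻¹ = diagonal fun i => (v i)⁻¹ := by
  refine inv_eq_left_inv ?_
  rw [diagonal_mul_diagonal, ← diagonal_one]
  exact congrArg diagonal <| funext fun i => inv_mul_cancel₀ (hv i)

theorem mul_inv_transpose_mul_mul_mul_transpose [CommRing R] {A : Matrix m m R}
    (hA : IsUnit A.det) (D : Matrix m m R) : A * (Aᵀ * D * A)⁻¹ * Aᵀ = D⁻¹ := by
  have hAt : IsUnit Aᵀ.det := by rwa [det_transpose]
  rw [mul_inv_rev, mul_inv_rev, ← Matrix.mul_assoc, ← Matrix.mul_assoc,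
    mul_nonsing_inv _ hA, Matrix.one_mul, Matrix.mul_assoc, nonsing_inv_mul _ hAt, Matrix.mul_one]

end Matrix

/-- The leverage of any unit assigned treatment `z_j` equals `1/n_j`:
`h̃_j (Xᵀ X)⁻¹ h̃_jᵀ = 1/n_j`, where
`Xᵀ X = ∑_{j'} n_{j'} h̃_{j'}ᵀ h̃_{j'}` with all `n_{j'} ≥ 1`. -/
theorem stmt15 (K : ℕ) (n : Fin (2 ^ K) → ℕ) (hn : ∀ j, 1 ≤ n j)
    (H : Matrix (Fin (2 ^ K)) (Fin (2 ^ K)) ℝ)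
    (hdot : ∀ j j', dotProduct (H j) (H j') =
      if j = j' then (2 : ℝ) ^ K else 0)
    (M : Matrix (Fin (2 ^ K)) (Fin (2 ^ K)) ℝ)
    (hM : M = ∑ j', (n j' : ℝ) • vecMulVec (H j') (H j')) :
    ∀ j, dotProduct (H j) (M⁻¹.mulVec (H j)) = (n j : ℝ)⁻¹ := by
  intro j
  have hHHt : H * Hᵀ = (2 : ℝ) ^ K • 1 := by
    ext a b
    simpa [mul_apply, one_apply, dotProduct] using hdot a b
  have hH : IsUnit H.det := isUnit_det_of_mul_transpose_eq_smul_one (by positivity) hHHt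
  have hD : (diagonal fun i => (n i : ℝ))⁻¹ = diagonal fun i => (n i : ℝ)⁻¹ :=
    inv_diagonal_of_ne_zero fun i => by exact_mod_cast Nat.one_le_iff_ne_zero.mp (hn i)
  have hlev := congrFun₂ (mul_inv_transpose_mul_mul_mul_transpose hH
    (diagonal fun i => (n i : ℝ))) j j
  rwa [← sum_smul_vecMulVec_row, ← hM, mul_mul_apply, transpose_transpose, hD,
    diagonal_apply_eq] at hlev
end
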